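/- Let p ≥ 5 be a prime and let G = ⟨a,b,c,d | [c,b], [d,a], [d,b], [d,c]⟩ be the class-2 exponent-p group on four generators with relations [c,b] = [d,a] = [d,b] = [d,c] = 1 (group 6.4.1, of order p^6). Then the number of conjugacy classes of G is 2p^4 − p^2, and the automorphism group of G has order (p − 1)^2(p^2 − 1)(p^2 − p)p^13. -/

import Mathlib

/-- The commutator `u⁻¹v⁻¹uv`. -/
def fgComm {α : Type} (u v : FreeGroup α) : FreeGroup α := u⁻¹ * v⁻¹ * u * v

/-- The relator set for the largest class-2 exponent-`p` group on `n` generators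
satisfying the extra relations `R`: we add all `p`-th powers and all triple commutators. -/
def classTwoRels (p n : ℕ) (R : Set (FreeGroup (Fin n))) : Set (FreeGroup (Fin n)) :=
  R ∪ (Set.range fun w : FreeGroup (Fin n) => w ^ p) ∪
    {x | ∃ u v w : FreeGroup (Fin n), x = fgComm (fgComm u v) w}

/-- The largest class-2 exponent-`p` group on `n` generators satisfying the relations `R`. -/
def ClassTwoGroup (p n : ℕ) (R : Set (FreeGroup (Fin n))) : Type :=
  PresentedGroup (classTwoRels p n R)

instance (p n : ℕ) (R : Set (FreeGroup (Fin n))) : Group (ClassTwoGroup p n R) := by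
  unfold ClassTwoGroup; infer_instance

/-- `H` is a class-3 descendant of `G` of order `p^9` with exponent `p`. -/
def IsClass3Descendant (p : ℕ) (G : Type) [Group G] (H : Type) [Group H] : Prop :=
  Nat.card H = p ^ 9 ∧ Monoid.exponent H = p ∧
    (⊤ : Subgroup H).lowerCentralSeries 3 = ⊥ ∧ (⊤ : Subgroup H).lowerCentralSeries 2 ≠ ⊥ ∧
    Nonempty ((H ⧸ (⊤ : Subgroup H).lowerCentralSeries 2) ≃* G)

/-- The multiplication underlying a group structure. -/
def mulOfGroup {α : Type} (g : Group α) : Mul α := by letI := g; infer_instance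

/-- `P` has exactly `k` isomorphism classes of groups satisfying it. -/
def IsIsoClassCount (P : (H : Type) → Group H → Prop) (k : ℕ) : Prop :=
  ∃ (H : Fin k → Type) (inst : (i : Fin k) → Group (H i)),
    (∀ i, P (H i) (inst i)) ∧
    (∀ i j : Fin k, i ≠ j →
      ¬ Nonempty (@MulEquiv (H i) (H j) (mulOfGroup (inst i)) (mulOfGroup (inst j)))) ∧
    (∀ (K : Type) (instK : Group K), P K instK →
      ∃ i, Nonempty (@MulEquiv K (H i) (mulOfGroup instK) (mulOfGroup (inst i))))

/-- `G` has exactly `k` class-3 descendants of order `p^9` with exponent `p`,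
up to isomorphism. -/
def DescendantCount (p : ℕ) (G : Type) [Group G] (k : ℕ) : Prop :=
  IsIsoClassCount (fun H inst => @IsClass3Descendant p G _ H inst) k

/-!
The group is realised on `(ZMod p)^6`, the point `⟨a, b, c, d, e, f⟩` standing for
`x₀^a x₁^b x₂^c x₃^d [x₁,x₀]^e [x₂,x₀]^f`. The generators of this model satisfy the defining
relations, and every element of the presented group has that normal form, so the two groups are
isomorphic; everything is then counted in the model.

Conjugating by `y` changes only `(e, f)`, by `(y.b a - b y.a, y.c a - c y.a)`. Hence a class is
determined by `(a, b, c, d)` and the class of `(e, f)` modulo a subspace of dimension `2`, `1` or `0`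
according as `a ≠ 0`, `a = 0 ≠ (b, c)` or `a = b = c = 0`, which gives
`(p-1)p³ + (p-1)p³ + (p-1)p² + p³ = 2p⁴ - p²` classes.

An automorphism is the same as a generating quadruple satisfying the relations. A quadruple of the
model generates iff the `4 × 4` matrix of the `(a, b, c, d)`-parts (the images in the Frattini
quotient) is invertible. Together with the relations this forces `x₃ ↦` a central element with
`d ≠ 0`, `x₁, x₂ ↦` elements with `a = 0` and independent `(b, c)`, and `x₀ ↦` an element with
`a ≠ 0`: that is `(p-1)p⁵ · |GL₂(𝔽_p)| p⁶ · (p-1)p²` choices.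
-/

section Commutator

variable {G H : Type*} [Group G] [Group H]

def commElt (x y : G) : G := x⁻¹ * y⁻¹ * x * y

lemma fgComm_eq_commElt {α : Type} (u v : FreeGroup α) : fgComm u v = commElt u v := rfl

lemma commElt_eq_one_iff {x y : G} : commElt x y = 1 ↔ Commute x y := by
  rw [commElt, mul_assoc, mul_assoc, inv_mul_eq_one, eq_inv_mul_iff_mul_eq, eq_comm]
  rfl

lemma map_commElt {F : Type*} [FunLike F G H] [MonoidHomClass F G H] (f : F) (x y : G) :
    f (commElt x y) = commElt (f x) (f y) := by
  simp [commElt]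

lemma mul_eq_mul_mul_commElt (x y : G) : x * y = y * x * commElt x y := by
  simp [commElt, mul_assoc]

variable (hG : ∀ x y z : G, Commute (commElt x y) z)
include hG

lemma commElt_mul_right (x y z : G) : commElt x (y * z) = commElt x y * commElt x z := by
  calc commElt x (y * z) = x⁻¹ * z⁻¹ * x * (commElt x y * z) := by simp only [commElt]; group
    _ = commElt x z * commElt x y := by rw [(hG x y z).eq]; simp only [commElt]; group
    _ = commElt x y * commElt x z := (hG x y _).eq.symm

lemma commElt_pow_right (x y : G) (n : ℕ) : commElt x (y ^ n) = commElt x y ^ n := by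
  induction n with
  | zero => simp [commElt]
  | succ n ih => rw [pow_succ, commElt_mul_right hG, ih, pow_succ]

lemma mul_pow_eq_pow_mul_commElt_pow (x y : G) (n : ℕ) :
    x * y ^ n = y ^ n * x * commElt x y ^ n := by
  rw [← commElt_pow_right hG, ← mul_eq_mul_mul_commElt]

end Commutator

section PowVal

variable {G : Type*} [Group G] {p : ℕ} {g : G}

lemma pow_val_natCast (hg : g ^ p = 1) (n : ℕ) : g ^ (n : ZMod p).val = g ^ n := by
  rw [ZMod.val_natCast, ← pow_eq_pow_mod _ hg]

variable [NeZero p]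

lemma pow_val_add (hg : g ^ p = 1) (u v : ZMod p) : g ^ (u + v).val = g ^ u.val * g ^ v.val := by
  rw [ZMod.val_add, ← pow_eq_pow_mod _ hg, pow_add]

lemma pow_val_one_add (hg : g ^ p = 1) (u : ZMod p) : g ^ (1 + u).val = g * g ^ u.val := by
  rw [pow_val_add hg, ← Nat.cast_one, pow_val_natCast hg, pow_one]

end PowVal

lemma commute_of_closure_eq_top {G : Type*} [Group G] {S : Set G}
    (hS : Subgroup.closure S = ⊤) {z : G} (hz : ∀ s ∈ S, Commute z s) (y : G) : Commute z y := by
  have : Subgroup.closure S ≤ Subgroup.centralizer {z} := (Subgroup.closure_le _).mpr fun s hs =>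
    Subgroup.mem_centralizer_singleton_iff.mpr (hz s hs).eq.symm
  exact (Subgroup.mem_centralizer_singleton_iff.mp (this (hS ▸ Subgroup.mem_top y))).symm

lemma MulEquiv.card_conjClasses_eq {G H : Type*} [Group G] [Group H] (e : G ≃* H) :
    Nat.card (ConjClasses G) = Nat.card (ConjClasses H) :=
  Nat.card_congr
    { toFun := ConjClasses.map e
      invFun := ConjClasses.map e.symm
      left_inv := fun c => by
        obtain ⟨x, rfl⟩ := ConjClasses.mk_surjective c
        exact congrArg ConjClasses.mk (e.symm_apply_apply x)
      right_inv := fun c => by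
        obtain ⟨x, rfl⟩ := ConjClasses.mk_surjective c
        exact congrArg ConjClasses.mk (e.apply_symm_apply x) }

namespace PresentedGroup

variable {α H : Type*} [Group H] {rels : Set (FreeGroup α)}

lemma lift_comp_of_eq_one (ψ : PresentedGroup rels →* H) {r : FreeGroup α} (hr : r ∈ rels) :
    FreeGroup.lift (fun x => ψ (of x)) r = 1 := by
  rw [← FreeGroup.lift_unique (ψ.comp (mk rels)) (f := fun x => ψ (of x)) fun _ => rfl,
    MonoidHom.comp_apply, one_of_mem hr, map_one]

lemma toGroup_lift_comp_of (ψ : PresentedGroup rels →* H) :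
    toGroup (fun _ hr => lift_comp_of_eq_one ψ hr) = ψ :=
  ext fun _ => toGroup.of _

lemma closure_range_comp_of {ψ : PresentedGroup rels →* H} (hψ : Function.Surjective ψ) :
    Subgroup.closure (Set.range fun x => ψ (of x)) = ⊤ := by
  rw [Set.range_comp' ψ of, ← MonoidHom.map_closure, closure_range_of, ← MonoidHom.range_eq_map,
    MonoidHom.range_eq_top.mpr hψ]

lemma toGroup_surjective {f : α → H} (h : ∀ r ∈ rels, FreeGroup.lift f r = 1)
    (hf : Subgroup.closure (Set.range f) = ⊤) : Function.Surjective (toGroup h) := by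
  rw [← MonoidHom.range_eq_top, eq_top_iff, ← hf, Subgroup.closure_le]
  rintro _ ⟨x, rfl⟩
  exact ⟨of x, toGroup.of h⟩

noncomputable def mulAutEquiv [Finite H] (e : PresentedGroup rels ≃* H) :
    MulAut H ≃
      {f : α → H // (∀ r ∈ rels, FreeGroup.lift f r = 1) ∧ Subgroup.closure (Set.range f) = ⊤} where
  toFun φ := ⟨fun x => (e.trans φ).toMonoidHom (of x),
    fun _ hr => lift_comp_of_eq_one _ hr, closure_range_comp_of (e.trans φ).surjective⟩
  invFun f :=
    have hsurj := (toGroup_surjective f.2.1 f.2.2).comp e.symm.surjective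
    MulEquiv.ofBijective ((toGroup f.2.1).comp (e.symm : H →* PresentedGroup rels))
      ⟨Finite.injective_iff_surjective.mpr hsurj, hsurj⟩
  left_inv φ := MulEquiv.ext fun y => by
    obtain ⟨z, rfl⟩ := e.surjective y
    show toGroup (fun _ hr => lift_comp_of_eq_one (e.trans φ).toMonoidHom hr) (e.symm (e z)) =
      φ (e z)
    rw [e.symm_apply_apply, toGroup_lift_comp_of]
    rfl
  right_inv f := Subtype.ext <| funext fun x => by
    show toGroup f.2.1 (e.symm (e (of x))) = f.1 x
    rw [e.symm_apply_apply, toGroup.of]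

end PresentedGroup

namespace ClassTwoGroup

variable {p n : ℕ} {R : Set (FreeGroup (Fin n))}

lemma pow_eq_one (g : PresentedGroup (classTwoRels p n R)) : g ^ p = 1 := by
  obtain ⟨w, rfl⟩ := PresentedGroup.mk_surjective _ g
  rw [← map_pow]
  exact PresentedGroup.one_of_mem (Or.inl (Or.inr ⟨w, rfl⟩))

lemma commute_commElt (x y z : PresentedGroup (classTwoRels p n R)) : Commute (commElt x y) z := by
  obtain ⟨u, rfl⟩ := PresentedGroup.mk_surjective _ x
  obtain ⟨v, rfl⟩ := PresentedGroup.mk_surjective _ y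
  obtain ⟨w, rfl⟩ := PresentedGroup.mk_surjective _ z
  rw [← commElt_eq_one_iff, ← map_commElt, ← map_commElt]
  exact PresentedGroup.one_of_mem (Or.inr ⟨u, v, w, rfl⟩)

lemma commute_of_fgComm_mem {i j : Fin n} (h : fgComm (.of i) (.of j) ∈ R) :
    Commute (PresentedGroup.of i : PresentedGroup (classTwoRels p n R)) (.of j) := by
  rw [← commElt_eq_one_iff]
  exact PresentedGroup.one_of_mem (rels := classTwoRels p n R) (Or.inl (Or.inl h))

lemma lift_eq_one_iff {M : Type*} [Group M] (hpow : ∀ x : M, x ^ p = 1)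
    (hcomm : ∀ x y z : M, Commute (commElt x y) z) (f : Fin n → M) :
    (∀ r ∈ classTwoRels p n R, FreeGroup.lift f r = 1) ↔ ∀ r ∈ R, FreeGroup.lift f r = 1 := by
  refine ⟨fun h r hr => h r (Or.inl (Or.inl hr)), ?_⟩
  rintro h r ((hr | ⟨w, rfl⟩) | ⟨u, v, w, rfl⟩)
  · exact h r hr
  · rw [map_pow, hpow]
  · simp only [fgComm_eq_commElt, map_commElt, commElt_eq_one_iff, hcomm]

end ClassTwoGroup

def rels641 : Set (FreeGroup (Fin 4)) :=
  {fgComm (.of 2) (.of 1), fgComm (.of 3) (.of 0), fgComm (.of 3) (.of 1), fgComm (.of 3) (.of 2)}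

lemma lift_rels641_iff {M : Type*} [Group M] (f : Fin 4 → M) :
    (∀ r ∈ rels641, FreeGroup.lift f r = 1) ↔
      Commute (f 2) (f 1) ∧ Commute (f 3) (f 0) ∧ Commute (f 3) (f 1) ∧ Commute (f 3) (f 2) := by
  simp [rels641, fgComm_eq_commElt, map_commElt, commElt_eq_one_iff]

abbrev Presented641 (p : ℕ) : Type := PresentedGroup (classTwoRels p 4 rels641)

/-- In the normal-form coordinates, moving `x₀^a'` to the left past `x₁^b x₂^c` produces the cross
terms `b a'` and `c a'` of the multiplication. -/
@[ext]
structure Model641 (p : ℕ) where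
  a : ZMod p
  b : ZMod p
  c : ZMod p
  d : ZMod p
  e : ZMod p
  f : ZMod p

namespace Model641

variable {p : ℕ}

instance : Mul (Model641 p) :=
  ⟨fun x y => ⟨x.a + y.a, x.b + y.b, x.c + y.c, x.d + y.d, x.e + y.e + x.b * y.a,
    x.f + y.f + x.c * y.a⟩⟩

instance : One (Model641 p) := ⟨⟨0, 0, 0, 0, 0, 0⟩⟩

instance : Inv (Model641 p) :=
  ⟨fun x => ⟨-x.a, -x.b, -x.c, -x.d, -x.e + x.b * x.a, -x.f + x.c * x.a⟩⟩

section Simp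

variable (x y : Model641 p)

@[simp] lemma mul_a : (x * y).a = x.a + y.a := rfl
@[simp] lemma mul_b : (x * y).b = x.b + y.b := rfl
@[simp] lemma mul_c : (x * y).c = x.c + y.c := rfl
@[simp] lemma mul_d : (x * y).d = x.d + y.d := rfl
@[simp] lemma mul_e : (x * y).e = x.e + y.e + x.b * y.a := rfl
@[simp] lemma mul_f : (x * y).f = x.f + y.f + x.c * y.a := rfl
@[simp] lemma one_a : (1 : Model641 p).a = 0 := rfl
@[simp] lemma one_b : (1 : Model641 p).b = 0 := rfl
@[simp] lemma one_c : (1 : Model641 p).c = 0 := rfl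
@[simp] lemma one_d : (1 : Model641 p).d = 0 := rfl
@[simp] lemma one_e : (1 : Model641 p).e = 0 := rfl
@[simp] lemma one_f : (1 : Model641 p).f = 0 := rfl
@[simp] lemma inv_a : x⁻¹.a = -x.a := rfl
@[simp] lemma inv_b : x⁻¹.b = -x.b := rfl
@[simp] lemma inv_c : x⁻¹.c = -x.c := rfl
@[simp] lemma inv_d : x⁻¹.d = -x.d := rfl
@[simp] lemma inv_e : x⁻¹.e = -x.e + x.b * x.a := rfl
@[simp] lemma inv_f : x⁻¹.f = -x.f + x.c * x.a := rfl

end Simp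

instance : Group (Model641 p) where
  mul_assoc x y z := by ext <;> simp <;> ring
  one_mul x := by ext <;> simp
  mul_one x := by ext <;> simp
  inv_mul_cancel x := by ext <;> simp

def equivProd : Model641 p ≃ ZMod p × ZMod p × ZMod p × ZMod p × ZMod p × ZMod p where
  toFun x := (x.a, x.b, x.c, x.d, x.e, x.f)
  invFun v := ⟨v.1, v.2.1, v.2.2.1, v.2.2.2.1, v.2.2.2.2.1, v.2.2.2.2.2⟩

instance [NeZero p] : Fintype (Model641 p) := Fintype.ofEquiv _ equivProd.symm

lemma pow_eq (x : Model641 p) (n : ℕ) :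
    x ^ n = ⟨n * x.a, n * x.b, n * x.c, n * x.d, n * x.e + n.choose 2 * (x.b * x.a),
      n * x.f + n.choose 2 * (x.c * x.a)⟩ := by
  induction n with
  | zero => ext <;> simp
  | succ n ih =>
    rw [pow_succ, ih]
    ext <;> simp [Nat.choose_succ_succ n 1] <;> ring

lemma pow_eq_one (hp : p.Prime) (hp2 : p ≠ 2) (x : Model641 p) : x ^ p = 1 := by
  have : ((p.choose 2 : ℕ) : ZMod p) = 0 :=
    (ZMod.natCast_eq_zero_iff _ _).mpr (hp.dvd_choose_self two_ne_zero (hp.two_le.lt_of_ne' hp2))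
  ext <;> simp [pow_eq, this]

lemma commElt_eq (x y : Model641 p) :
    commElt x y = ⟨0, 0, 0, 0, x.b * y.a - y.b * x.a, x.c * y.a - y.c * x.a⟩ := by
  ext <;> simp [commElt] <;> ring

lemma commute_iff {x y : Model641 p} :
    Commute x y ↔ x.b * y.a = y.b * x.a ∧ x.c * y.a = y.c * x.a := by
  rw [← commElt_eq_one_iff, commElt_eq, Model641.ext_iff]
  simp [sub_eq_zero]

lemma commute_commElt (x y z : Model641 p) : Commute (commElt x y) z := by
  rw [commute_iff, commElt_eq]
  simp

lemma conj_eq (y x : Model641 p) :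
    y * x * y⁻¹ =
      ⟨x.a, x.b, x.c, x.d, x.e + y.b * x.a - x.b * y.a, x.f + y.c * x.a - x.c * y.a⟩ := by
  ext <;> simp <;> ring

def gen : Fin 4 → Model641 p :=
  ![⟨1, 0, 0, 0, 0, 0⟩, ⟨0, 1, 0, 0, 0, 0⟩, ⟨0, 0, 1, 0, 0, 0⟩, ⟨0, 0, 0, 1, 0, 0⟩]

lemma lift_gen_eq_one (hp : p.Prime) (hp2 : p ≠ 2) :
    ∀ r ∈ classTwoRels p 4 rels641, FreeGroup.lift (gen : Fin 4 → Model641 p) r = 1 := by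
  rw [ClassTwoGroup.lift_eq_one_iff (pow_eq_one hp hp2) commute_commElt, lift_rels641_iff]
  simp [commute_iff, gen]

end Model641

namespace Presented641

variable {p : ℕ}

def gen (i : Fin 4) : Presented641 p := PresentedGroup.of i

lemma commute_gen {i j : Fin 4} (h : fgComm (.of i) (.of j) ∈ rels641) :
    Commute (gen i : Presented641 p) (gen j) :=
  ClassTwoGroup.commute_of_fgComm_mem h

lemma commute_commElt (x y z : Presented641 p) : Commute (commElt x y) z :=
  ClassTwoGroup.commute_commElt x y z

local notation "E" => commElt (gen 1 : Presented641 p) (gen 0)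
local notation "F" => commElt (gen 2 : Presented641 p) (gen 0)

def nf (a b c d e f : ℕ) : Presented641 p :=
  gen 0 ^ a * gen 1 ^ b * gen 2 ^ c * gen 3 ^ d * E ^ e * F ^ f

section NormalForm

variable (a b c d e f : ℕ)

lemma gen_zero_mul_nf : (gen 0 : Presented641 p) * nf a b c d e f = nf (a + 1) b c d e f := by
  simp only [nf]; group

lemma gen_one_mul_nf : (gen 1 : Presented641 p) * nf a b c d e f = nf a (b + 1) c d (e + a) f := by
  calc gen 1 * nf a b c d e f
      = gen 1 * gen 0 ^ a * (gen 1 ^ b * gen 2 ^ c * gen 3 ^ d) * E ^ e * F ^ f := by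
        simp only [nf]; group
    _ = gen 0 ^ a * gen 1 * (E ^ a * (gen 1 ^ b * gen 2 ^ c * gen 3 ^ d)) * E ^ e * F ^ f := by
        rw [mul_pow_eq_pow_mul_commElt_pow commute_commElt (gen 1) (gen 0) a]; group
    _ = nf a (b + 1) c d (e + a) f := by
        rw [((commute_commElt _ _ _).pow_left _).eq]; simp only [nf]; group

lemma gen_two_mul_nf : (gen 2 : Presented641 p) * nf a b c d e f = nf a b (c + 1) d e (f + a) := by
  calc gen 2 * nf a b c d e f
      = gen 2 * gen 0 ^ a * (gen 1 ^ b * gen 2 ^ c * gen 3 ^ d * E ^ e) * F ^ f := by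
        simp only [nf]; group
    _ = gen 0 ^ a * (gen 2 * gen 1 ^ b) * gen 2 ^ c * gen 3 ^ d * E ^ e * (F ^ a * F ^ f) := by
        rw [mul_pow_eq_pow_mul_commElt_pow commute_commElt (gen 2) (gen 0) a, mul_assoc _ (F ^ a),
          ((commute_commElt _ _ _).pow_left _).eq]
        group
    _ = nf a b (c + 1) d e (f + a) := by
        rw [((commute_gen (by simp [rels641])).pow_right _).eq]; simp only [nf]; group

lemma gen_three_mul_nf : (gen 3 : Presented641 p) * nf a b c d e f = nf a b c (d + 1) e f := by
  have h : Commute (gen 3) (gen 0 ^ a * gen 1 ^ b * gen 2 ^ c : Presented641 p) :=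
    (((commute_gen (by simp [rels641])).pow_right _).mul_right
      ((commute_gen (by simp [rels641])).pow_right _)).mul_right
        ((commute_gen (by simp [rels641])).pow_right _)
  calc gen 3 * nf a b c d e f
      = gen 3 * (gen 0 ^ a * gen 1 ^ b * gen 2 ^ c) * gen 3 ^ d * E ^ e * F ^ f := by
        simp only [nf]; group
    _ = nf a b c (d + 1) e f := by rw [h.eq]; simp only [nf]; group

end NormalForm

def ofModel (x : Model641 p) : Presented641 p := nf x.a.val x.b.val x.c.val x.d.val x.e.val x.f.val

variable [NeZero p]

lemma gen_mul_ofModel (i : Fin 4) (x : Model641 p) :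
    gen i * ofModel x = ofModel (Model641.gen i * x) := by
  have hpow (g : Presented641 p) : g ^ p = 1 := ClassTwoGroup.pow_eq_one g
  fin_cases i <;> simp [ofModel, Model641.gen, gen_zero_mul_nf, gen_one_mul_nf, gen_two_mul_nf,
    gen_three_mul_nf] <;> simp only [nf, pow_val_one_add (hpow _), pow_val_add (hpow _)] <;> group

lemma ofModel_surjective : Function.Surjective (ofModel : Model641 p → Presented641 p) := by
  have htop : Submonoid.closure (Set.range (gen : Fin 4 → Presented641 p)) = ⊤ := by
    rw [← Subgroup.closure_toSubmonoid_of_isOfFinOrder]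
    · show (Subgroup.closure (Set.range PresentedGroup.of)).toSubmonoid = ⊤
      rw [PresentedGroup.closure_range_of]
      rfl
    · exact fun g _ => isOfFinOrder_iff_pow_eq_one.mpr ⟨p, NeZero.pos p, ClassTwoGroup.pow_eq_one g⟩
  intro g
  induction g using Submonoid.induction_of_closure_eq_top_left htop with
  | one => exact ⟨1, by simp [ofModel, nf]⟩
  | mul_left _ hg y hy =>
    obtain ⟨i, rfl⟩ := hg
    obtain ⟨x, rfl⟩ := hy
    exact ⟨Model641.gen i * x, (gen_mul_ofModel i x).symm⟩

variable (hp : p.Prime) (hp2 : p ≠ 2)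

noncomputable def toModel : Presented641 p →* Model641 p :=
  PresentedGroup.toGroup (Model641.lift_gen_eq_one hp hp2)

lemma toModel_ofModel : Function.LeftInverse (toModel hp hp2) ofModel := fun x => by
  simp only [ofModel, nf, toModel, gen, map_mul, map_pow, map_commElt, PresentedGroup.toGroup.of]
  ext <;> simp [Model641.pow_eq, Model641.commElt_eq, Model641.gen]

noncomputable def equivModel : Presented641 p ≃* Model641 p :=
  MulEquiv.ofBijective (toModel hp hp2)
    ⟨((toModel_ofModel hp hp2).rightInverse_of_surjective ofModel_surjective).injective,
      (toModel_ofModel hp hp2).surjective⟩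

end Presented641

namespace Model641

variable {p : ℕ} [Fact p.Prime]

def classRep (x : Model641 p) : Model641 p :=
  if x.a ≠ 0 then ⟨x.a, x.b, x.c, x.d, 0, 0⟩
  else if x.b ≠ 0 then ⟨x.a, x.b, x.c, x.d, 0, x.f - x.e * x.c / x.b⟩
  else if x.c ≠ 0 then ⟨x.a, x.b, x.c, x.d, x.e, 0⟩
  else x

lemma isConj_classRep (x : Model641 p) : IsConj x (classRep x) := by
  rw [isConj_iff]
  unfold classRep
  split_ifs with ha hb hc
  · refine ⟨⟨0, -x.e / x.a, -x.f / x.a, 0, 0, 0⟩, ?_⟩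
    rw [conj_eq]; ext <;> field_simp <;> ring
  · refine ⟨⟨x.e / x.b, 0, 0, 0, 0, 0⟩, ?_⟩
    rw [conj_eq]
    ext <;> simp_all [mul_div_cancel₀, mul_div_assoc']
    ring
  · refine ⟨⟨x.f / x.c, 0, 0, 0, 0, 0⟩, ?_⟩
    rw [conj_eq]
    ext <;> simp_all [mul_div_cancel₀]
  · exact ⟨1, by group⟩

lemma classRep_conj (x y : Model641 p) : classRep (y * x * y⁻¹) = classRep x := by
  rw [conj_eq]
  unfold classRep
  split_ifs <;> ext <;> simp_all
  field_simp
  ring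

lemma isConj_iff_classRep_eq {x y : Model641 p} : IsConj x y ↔ classRep x = classRep y := by
  refine ⟨fun h => ?_, fun h => (isConj_classRep x).trans (h ▸ (isConj_classRep y).symm)⟩
  obtain ⟨z, rfl⟩ := isConj_iff.mp h
  exact (classRep_conj x z).symm

noncomputable def conjClassesEquiv :
    ConjClasses (Model641 p) ≃ {x : Model641 p // classRep x = x} where
  toFun := Quotient.lift
    (fun x => ⟨classRep x, (isConj_iff_classRep_eq.mp (isConj_classRep x)).symm⟩)
    fun _ _ h => Subtype.ext (isConj_iff_classRep_eq.mp h)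
  invFun x := ConjClasses.mk x.1
  left_inv c := by
    obtain ⟨x, rfl⟩ := ConjClasses.mk_surjective c
    exact ConjClasses.mk_eq_mk_iff_isConj.mpr (isConj_classRep x).symm
  right_inv x := Subtype.ext x.2

lemma classRep_eq_self_iff (x : Model641 p) : classRep x = x ↔
    x.a ≠ 0 ∧ x.e = 0 ∧ x.f = 0 ∨ x.a = 0 ∧ x.b ≠ 0 ∧ x.e = 0 ∨
      x.a = 0 ∧ x.b = 0 ∧ x.c ≠ 0 ∧ x.f = 0 ∨ x.a = 0 ∧ x.b = 0 ∧ x.c = 0 := by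
  unfold classRep
  split_ifs <;> simp_all [Model641.ext_iff, eq_comm]

lemma card_ne_zero : Nat.card {u : ZMod p // u ≠ 0} = p - 1 := by
  rw [← Nat.card_congr unitsEquivNeZero, Nat.card_eq_fintype_card, ZMod.card_units]

lemma card_a_ne_zero_e_f_eq_zero :
    Nat.card {x : Model641 p // x.a ≠ 0 ∧ x.e = 0 ∧ x.f = 0} = (p - 1) * p ^ 3 := by
  let e : {x : Model641 p // x.a ≠ 0 ∧ x.e = 0 ∧ x.f = 0} ≃
      {u : ZMod p // u ≠ 0} × ZMod p × ZMod p × ZMod p :=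
    { toFun x := (⟨x.1.a, x.2.1⟩, x.1.b, x.1.c, x.1.d)
      invFun y := ⟨⟨y.1, y.2.1, y.2.2.1, y.2.2.2, 0, 0⟩, y.1.2, rfl, rfl⟩
      left_inv := fun ⟨x, _, he, hf⟩ => by ext <;> simp [he, hf]
      right_inv _ := rfl }
  rw [Nat.card_congr e, Nat.card_prod, Nat.card_prod, Nat.card_prod, card_ne_zero, Nat.card_zmod]
  ring

lemma card_a_eq_zero_b_ne_zero_e_eq_zero :
    Nat.card {x : Model641 p // x.a = 0 ∧ x.b ≠ 0 ∧ x.e = 0} = (p - 1) * p ^ 3 := by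
  let e : {x : Model641 p // x.a = 0 ∧ x.b ≠ 0 ∧ x.e = 0} ≃
      {u : ZMod p // u ≠ 0} × ZMod p × ZMod p × ZMod p :=
    { toFun x := (⟨x.1.b, x.2.2.1⟩, x.1.c, x.1.d, x.1.f)
      invFun y := ⟨⟨0, y.1, y.2.1, y.2.2.1, 0, y.2.2.2⟩, rfl, y.1.2, rfl⟩
      left_inv := fun ⟨x, ha, _, he⟩ => by ext <;> simp [ha, he]
      right_inv _ := rfl }
  rw [Nat.card_congr e, Nat.card_prod, Nat.card_prod, Nat.card_prod, card_ne_zero, Nat.card_zmod]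
  ring

lemma card_a_b_eq_zero_c_ne_zero_f_eq_zero :
    Nat.card {x : Model641 p // x.a = 0 ∧ x.b = 0 ∧ x.c ≠ 0 ∧ x.f = 0} = (p - 1) * p ^ 2 := by
  let e : {x : Model641 p // x.a = 0 ∧ x.b = 0 ∧ x.c ≠ 0 ∧ x.f = 0} ≃
      {u : ZMod p // u ≠ 0} × ZMod p × ZMod p :=
    { toFun x := (⟨x.1.c, x.2.2.2.1⟩, x.1.d, x.1.e)
      invFun y := ⟨⟨0, 0, y.1, y.2.1, y.2.2, 0⟩, rfl, rfl, y.1.2, rfl⟩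
      left_inv := fun ⟨x, ha, hb, _, hf⟩ => by ext <;> simp [ha, hb, hf]
      right_inv _ := rfl }
  rw [Nat.card_congr e, Nat.card_prod, Nat.card_prod, card_ne_zero, Nat.card_zmod]
  ring

lemma card_a_b_c_eq_zero : Nat.card {x : Model641 p // x.a = 0 ∧ x.b = 0 ∧ x.c = 0} = p ^ 3 := by
  let e : {x : Model641 p // x.a = 0 ∧ x.b = 0 ∧ x.c = 0} ≃ ZMod p × ZMod p × ZMod p :=
    { toFun x := (x.1.d, x.1.e, x.1.f)
      invFun y := ⟨⟨0, 0, 0, y.1, y.2.1, y.2.2⟩, rfl, rfl, rfl⟩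
      left_inv := fun ⟨x, ha, hb, hc⟩ => by ext <;> simp [ha, hb, hc]
      right_inv _ := rfl }
  rw [Nat.card_congr e, Nat.card_prod, Nat.card_prod, Nat.card_zmod]
  ring

lemma card_conjClasses : Nat.card (ConjClasses (Model641 p)) = 2 * p ^ 4 - p ^ 2 := by
  classical
  have hdisj {P Q : Model641 p → Prop} (h : ∀ x, P x → Q x → False) : Disjoint P Q :=
    fun _ hP hQ x hx => h x (hP x hx) (hQ x hx)
  rw [Nat.card_congr (conjClassesEquiv.trans (Equiv.subtypeEquivRight classRep_eq_self_iff)),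
    Nat.card_eq_fintype_card,
    Fintype.card_subtype_or_disjoint _ _ (hdisj fun x h1 h2 => by grind),
    Fintype.card_subtype_or_disjoint _ _ (hdisj fun x h1 h2 => by grind),
    Fintype.card_subtype_or_disjoint _ _ (hdisj fun x h1 h2 => by grind)]
  simp only [← Nat.card_eq_fintype_card, card_a_ne_zero_e_f_eq_zero,
    card_a_eq_zero_b_ne_zero_e_eq_zero, card_a_b_eq_zero_c_ne_zero_f_eq_zero, card_a_b_c_eq_zero]
  have h1 : 1 ≤ p := (Fact.out : p.Prime).one_le
  have h2 : p ^ 2 ≤ 2 * p ^ 4 := by nlinarith [Nat.pow_le_pow_right h1 (show 2 ≤ 4 by norm_num)]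
  zify [h1, h2]
  ring

def abcdMatrix (q : Fin 4 → Model641 p) : Matrix (Fin 4) (Fin 4) (ZMod p) :=
  Matrix.of fun i => ![(q i).a, (q i).b, (q i).c, (q i).d]

def linearForm (v : Fin 4 → ZMod p) : Model641 p →* Multiplicative (ZMod p) where
  toFun x := .ofAdd (x.a * v 0 + x.b * v 1 + x.c * v 2 + x.d * v 3)
  map_one' := by simp
  map_mul' x y := by simp only [mul_a, mul_b, mul_c, mul_d, ← ofAdd_add]; ring_nf

lemma det_abcdMatrix_ne_zero {q : Fin 4 → Model641 p}
    (hq : Subgroup.closure (Set.range q) = ⊤) : (abcdMatrix q).det ≠ 0 := by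
  intro hdet
  obtain ⟨v, hv, hqv⟩ := Matrix.exists_mulVec_eq_zero_iff.mpr hdet
  have hker : (linearForm v).ker = ⊤ := by
    rw [eq_top_iff, ← hq, Subgroup.closure_le]
    rintro _ ⟨i, rfl⟩
    have := congrFun hqv i
    simp [Matrix.mulVec, dotProduct, Fin.sum_univ_four, abcdMatrix] at this
    rw [SetLike.mem_coe, MonoidHom.mem_ker, ← ofAdd_zero, ← this]
    rfl
  apply hv
  ext j
  have := congrArg Multiplicative.toAdd
    ((linearForm v).mem_ker.mp (hker ▸ Subgroup.mem_top (gen j)))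
  fin_cases j <;> simpa [linearForm, gen] using this

lemma eq_top_of_forall_exists_mem (H : Subgroup (Model641 p))
    (hH : ∀ a b c d : ZMod p, ∃ h ∈ H, h.a = a ∧ h.b = b ∧ h.c = c ∧ h.d = d) : H = ⊤ := by
  obtain ⟨x, hx, hxa, hxb, hxc, -⟩ := hH 1 0 0 0
  obtain ⟨y, hy, hya, hyb, hyc, -⟩ := hH 0 1 0 0
  obtain ⟨z, hz, hza, hzb, hzc, -⟩ := hH 0 0 1 0
  -- `commElt` only sees `(a, b, c)`-parts, so `[y, x]` and `[z, x]` are the basic central elements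
  have hcenter (e f : ZMod p) : (⟨0, 0, 0, 0, e, f⟩ : Model641 p) ∈ H := by
    have : (⟨0, 0, 0, 0, e, f⟩ : Model641 p) = commElt y x ^ e.val * commElt z x ^ f.val := by
      ext <;> simp [pow_eq, commElt_eq, hxa, hxb, hxc, hya, hyb, hyc, hza, hzb, hzc]
    rw [this]
    exact mul_mem (pow_mem (mul_mem (mul_mem (mul_mem (inv_mem hy) (inv_mem hx)) hy) hx) _)
      (pow_mem (mul_mem (mul_mem (mul_mem (inv_mem hz) (inv_mem hx)) hz) hx) _)
  refine (Subgroup.eq_top_iff' H).mpr fun m => ?_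
  obtain ⟨h, hh, ha, hb, hc, hd⟩ := hH m.a m.b m.c m.d
  have : h⁻¹ * m = ⟨0, 0, 0, 0, (h⁻¹ * m).e, (h⁻¹ * m).f⟩ := by ext <;> simp [ha, hb, hc, hd]
  rw [← mul_inv_cancel_left h m, this]
  exact mul_mem hh (hcenter _ _)

lemma closure_eq_top_of_det_ne_zero {q : Fin 4 → Model641 p} (hdet : (abcdMatrix q).det ≠ 0) :
    Subgroup.closure (Set.range q) = ⊤ := by
  refine eq_top_of_forall_exists_mem _ fun a b c d => ?_
  obtain ⟨v, hv⟩ := Matrix.vecMul_surjective_iff_isUnit.mpr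
    ((Matrix.isUnit_iff_isUnit_det _).mpr hdet.isUnit) ![a, b, c, d]
  have hmem (i : Fin 4) : q i ∈ Subgroup.closure (Set.range q) :=
    Subgroup.subset_closure (Set.mem_range_self i)
  refine ⟨q 0 ^ (v 0).val * q 1 ^ (v 1).val * q 2 ^ (v 2).val * q 3 ^ (v 3).val,
    mul_mem (mul_mem (mul_mem (pow_mem (hmem 0) _) (pow_mem (hmem 1) _)) (pow_mem (hmem 2) _))
      (pow_mem (hmem 3) _), ?_⟩
  have h (j : Fin 4) := congrFun hv j
  simp [Matrix.vecMul, dotProduct, Fin.sum_univ_four, abcdMatrix] at h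
  simp only [pow_eq, mul_a, mul_b, mul_c, mul_d, ZMod.natCast_val, ZMod.cast_id', id]
  exact ⟨h 0, h 1, h 2, h 3⟩

lemma abc_eq_zero_of_forall_commute {z : Model641 p} (hz : ∀ y, Commute z y) :
    z.a = 0 ∧ z.b = 0 ∧ z.c = 0 := by
  have h0 := commute_iff.mp (hz (gen 0))
  have h1 := commute_iff.mp (hz (gen 1))
  simp [gen] at h0 h1
  exact ⟨h1.symm, h0.1, h0.2⟩

lemma det_abcdMatrix_of_abc_eq_zero {q : Fin 4 → Model641 p}
    (h3 : (q 3).a = 0 ∧ (q 3).b = 0 ∧ (q 3).c = 0) :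
    (abcdMatrix q).det = (q 3).d * ((q 0).a * ((q 1).b * (q 2).c - (q 1).c * (q 2).b) -
      (q 0).b * ((q 1).a * (q 2).c - (q 1).c * (q 2).a) +
      (q 0).c * ((q 1).a * (q 2).b - (q 1).b * (q 2).a)) := by
  simp [Matrix.det_succ_row_zero, Fin.sum_univ_succ, abcdMatrix, h3, Fin.succAbove]
  ring

def IsAutTuple (q : Fin 4 → Model641 p) : Prop :=
  (q 0).a ≠ 0 ∧ (q 1).a = 0 ∧ (q 2).a = 0 ∧ ((q 3).a = 0 ∧ (q 3).b = 0 ∧ (q 3).c = 0) ∧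
    (q 3).d ≠ 0 ∧ (q 1).b * (q 2).c - (q 1).c * (q 2).b ≠ 0

lemma commute_and_closure_eq_top_iff (q : Fin 4 → Model641 p) :
    (Commute (q 2) (q 1) ∧ Commute (q 3) (q 0) ∧ Commute (q 3) (q 1) ∧ Commute (q 3) (q 2)) ∧
      Subgroup.closure (Set.range q) = ⊤ ↔ IsAutTuple q := by
  constructor
  · rintro ⟨⟨h21, h30, h31, h32⟩, hq⟩
    have h3 : (q 3).a = 0 ∧ (q 3).b = 0 ∧ (q 3).c = 0 := by
      refine abc_eq_zero_of_forall_commute (commute_of_closure_eq_top hq ?_)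
      rintro _ ⟨i, rfl⟩
      fin_cases i
      exacts [h30, h31, h32, Commute.refl _]
    have hdet := det_abcdMatrix_ne_zero hq
    rw [det_abcdMatrix_of_abc_eq_zero h3] at hdet
    obtain ⟨hb, hc⟩ := commute_iff.mp h21
    set D := (q 1).b * (q 2).c - (q 1).c * (q 2).b
    have hdet' : (q 3).d * ((q 0).a * D) ≠ 0 := by
      convert hdet using 1
      linear_combination (q 3).d * (q 0).b * hc - (q 3).d * (q 0).c * hb
    obtain ⟨hd, h0, hD⟩ : (q 3).d ≠ 0 ∧ (q 0).a ≠ 0 ∧ D ≠ 0 := by simpa using hdet'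
    have h1 : (q 1).a * D = 0 := by linear_combination (q 1).b * hc - (q 1).c * hb
    have h2 : (q 2).a * D = 0 := by linear_combination (q 2).b * hc - (q 2).c * hb
    exact ⟨h0, (mul_eq_zero.mp h1).resolve_right hD, (mul_eq_zero.mp h2).resolve_right hD, h3, hd,
      hD⟩
  · rintro ⟨h0, h1, h2, h3, hd, hD⟩
    refine ⟨?_, closure_eq_top_of_det_ne_zero ?_⟩
    · simp [commute_iff, h1, h2, h3]
    · rw [det_abcdMatrix_of_abc_eq_zero h3, h1, h2]
      simpa [h0, hd] using hD

noncomputable def isAutTupleEquiv : {q : Fin 4 → Model641 p // IsAutTuple q} ≃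
    {u : ZMod p // u ≠ 0} × (ZMod p × ZMod p × ZMod p × ZMod p × ZMod p) × GL (Fin 2) (ZMod p) ×
      (ZMod p × ZMod p × ZMod p) × (ZMod p × ZMod p × ZMod p) × {u : ZMod p // u ≠ 0} ×
      (ZMod p × ZMod p) where
  toFun q := (⟨(q.1 0).a, q.2.1⟩, ((q.1 0).b, (q.1 0).c, (q.1 0).d, (q.1 0).e, (q.1 0).f),
    .mkOfDetNeZero !![(q.1 1).b, (q.1 1).c; (q.1 2).b, (q.1 2).c]
      (by simpa [Matrix.det_fin_two_of] using q.2.2.2.2.2.2),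
    ((q.1 1).d, (q.1 1).e, (q.1 1).f), ((q.1 2).d, (q.1 2).e, (q.1 2).f),
    ⟨(q.1 3).d, q.2.2.2.2.2.1⟩, ((q.1 3).e, (q.1 3).f))
  invFun := fun ⟨a0, ⟨b0, c0, d0, e0, f0⟩, M, ⟨d1, e1, f1⟩, ⟨d2, e2, f2⟩, d3, ⟨e3, f3⟩⟩ =>
    ⟨![⟨a0, b0, c0, d0, e0, f0⟩, ⟨0, M.1 0 0, M.1 0 1, d1, e1, f1⟩,
        ⟨0, M.1 1 0, M.1 1 1, d2, e2, f2⟩, ⟨0, 0, 0, d3, e3, f3⟩],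
      a0.2, rfl, rfl, ⟨rfl, rfl, rfl⟩, d3.2, by simpa [Matrix.det_fin_two] using M.det_ne_zero⟩
  left_inv := fun ⟨q, _, h1, h2, ⟨h3a, h3b, h3c⟩, _⟩ => by
    refine Subtype.ext (funext fun i => ?_)
    fin_cases i <;> ext <;> simp [h1, h2, h3a, h3b, h3c]
  right_inv := fun ⟨_, _, M, _, _, _, _⟩ => by
    simp only [Prod.mk.injEq]
    refine ⟨rfl, rfl, Matrix.GeneralLinearGroup.ext fun i j => ?_, rfl, rfl, rfl, rfl⟩
    fin_cases i <;> fin_cases j <;> rfl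

lemma card_mulAut (hp2 : p ≠ 2) :
    Nat.card (MulAut (Model641 p)) = (p - 1) ^ 2 * (p ^ 2 - 1) * (p ^ 2 - p) * p ^ 13 := by
  have hp : p.Prime := Fact.out
  rw [Nat.card_congr ((PresentedGroup.mulAutEquiv (Presented641.equivModel hp hp2)).trans
    ((Equiv.subtypeEquivRight fun q => ?_).trans isAutTupleEquiv))]
  · simp only [Nat.card_prod, card_ne_zero, Nat.card_zmod, Matrix.card_GL_field, ZMod.card,
      Fin.prod_univ_two, Fin.val_zero, Fin.val_one, pow_zero, pow_one]
    ring
  · rw [ClassTwoGroup.lift_eq_one_iff (pow_eq_one hp hp2) commute_commElt, lift_rels641_iff,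
      commute_and_closure_eq_top_iff]

end Model641

theorem group_6_4_1 (p : ℕ) (hp : p.Prime) (h5 : 5 ≤ p) :
    Nat.card (ConjClasses (ClassTwoGroup p 4 ({fgComm (FreeGroup.of (2 : Fin 4)) (FreeGroup.of (1 : Fin 4)), fgComm (FreeGroup.of (3 : Fin 4)) (FreeGroup.of (0 : Fin 4)), fgComm (FreeGroup.of (3 : Fin 4)) (FreeGroup.of (1 : Fin 4)), fgComm (FreeGroup.of (3 : Fin 4)) (FreeGroup.of (2 : Fin 4))} : Set (FreeGroup (Fin 4))))) = 2 * p ^ 4 - p ^ 2 ∧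
    Nat.card (MulAut (ClassTwoGroup p 4 ({fgComm (FreeGroup.of (2 : Fin 4)) (FreeGroup.of (1 : Fin 4)), fgComm (FreeGroup.of (3 : Fin 4)) (FreeGroup.of (0 : Fin 4)), fgComm (FreeGroup.of (3 : Fin 4)) (FreeGroup.of (1 : Fin 4)), fgComm (FreeGroup.of (3 : Fin 4)) (FreeGroup.of (2 : Fin 4))} : Set (FreeGroup (Fin 4))))) = (p - 1) ^ 2 * (p ^ 2 - 1) * (p ^ 2 - p) * p ^ 13 := by
  have : Fact p.Prime := ⟨hp⟩
  have hp2 : p ≠ 2 := by omega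
  let e : Presented641 p ≃* Model641 p := Presented641.equivModel hp hp2
  exact ⟨e.card_conjClasses_eq.trans Model641.card_conjClasses,
    (Nat.card_congr (MulAut.congr e).toEquiv).trans (Model641.card_mulAut hp2)⟩
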